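/- For every integer m ≥ 2, the two-generator Artin group G_m = ⟨a₁, a₂ ∣ (a₁,a₂)_m = (a₂,a₁)_m⟩ is isomorphic to the group I_m = ⟨x, a₁, a₂, …, a_m ∣ x = a₁a₂, x = a₂a₃, …, x = a_m a₁⟩. -/

import Mathlib

/-- The alternating word `xyxy…` with exactly `n` letters, starting with `x`. -/
def altWord {M : Type*} [Monoid M] (x y : M) : ℕ → M
  | 0 => 1
  | n + 1 => x * altWord y x n

/-- Cyclic successor on `Fin m`. -/
def finCycSucc {m : ℕ} (i : Fin m) : Fin m :=
  ⟨(i.val + 1) % m, Nat.mod_lt _ i.pos⟩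

/-- The relations of the presentation
`I_m = ⟨x, a₁, …, a_m ∣ x = a₁a₂, x = a₂a₃, …, x = a_m a₁⟩`,
where `Sum.inl i` is the generator `a_{i+1}` (for `i : Fin m`) and `Sum.inr ()` is `x`. -/
def IRels (m : ℕ) : Set (FreeGroup (Fin m ⊕ Unit)) :=
  {r | ∃ i : Fin m,
    r = FreeGroup.of (Sum.inr ()) *
      (FreeGroup.of (Sum.inl i) * FreeGroup.of (Sum.inl (finCycSucc i)))⁻¹}


/-!
In `I_m` the relations `aᵢ aᵢ₊₁ = x` determine each generator from the previous one,
`aᵢ₊₁ = aᵢ⁻¹ x`, so `I_m` is generated by `a₁, a₂` with `x = a₁ a₂`, and the only remaining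
relation is that the sequence `g₀ = a₁`, `gₙ₊₁ = gₙ⁻¹ x` closes up: `g_m = a₁`. Since
`g_{2k} = x⁻ᵏ a₁ xᵏ`, `g_{2k+1} = x⁻ᵏ a₂ xᵏ`, `(a₁,a₂)_{2k} = xᵏ` and `(a₁,a₂)_{2k+1} = xᵏ a₁`,
this closing condition is equivalent to the Artin relation `(a₁,a₂)_m = (a₂,a₁)_m`.
-/

open PresentedGroup Function

namespace ArtinPresentation

section Chain

variable {G : Type*} [Group G]

def chainSeq (a x : G) : ℕ → G
  | 0 => a
  | n + 1 => (chainSeq a x n)⁻¹ * x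

variable (a x : G)

@[simp]
lemma chainSeq_zero : chainSeq a x 0 = a := rfl

lemma chainSeq_succ (n : ℕ) : chainSeq a x (n + 1) = (chainSeq a x n)⁻¹ * x := rfl

@[simp]
lemma chainSeq_one (b : G) : chainSeq a (a * b) 1 = b := inv_mul_cancel_left a b

lemma chainSeq_mul_chainSeq_succ (n : ℕ) : chainSeq a x n * chainSeq a x (n + 1) = x :=
  mul_inv_cancel_left _ _

lemma eq_chainSeq_of_mul_succ {g : ℕ → G} (hg : ∀ n, g n * g (n + 1) = x) (n : ℕ) :
    g n = chainSeq (g 0) x n := by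
  induction n with
  | zero => rfl
  | succ n ih => rw [chainSeq_succ, ← ih, ← hg n, inv_mul_cancel_left]

lemma map_chainSeq {H : Type*} [Group H] (f : G →* H) (n : ℕ) :
    f (chainSeq a x n) = chainSeq (f a) (f x) n := by
  induction n with
  | zero => rfl
  | succ n ih => rw [chainSeq_succ, chainSeq_succ, map_mul, map_inv, ih]

lemma chainSeq_periodic {m : ℕ} (h : chainSeq a x m = a) : Periodic (chainSeq a x) m := by
  intro n
  induction n with
  | zero => rwa [zero_add]
  | succ n ih => rw [Nat.add_right_comm, chainSeq_succ, ih, chainSeq_succ]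

lemma chainSeq_two_mul_add (k n : ℕ) :
    chainSeq a x (2 * k + n) = (x ^ k)⁻¹ * chainSeq a x n * x ^ k := by
  induction k with
  | zero => simp
  | succ k ih =>
    rw [show 2 * (k + 1) + n = 2 * k + n + 1 + 1 by ring, chainSeq_succ, chainSeq_succ, ih,
      pow_succ]
    group

end Chain

lemma map_altWord {M N : Type*} [Monoid M] [Monoid N] (f : M →* N) (a b : M) (n : ℕ) :
    f (altWord a b n) = altWord (f a) (f b) n := by
  induction n generalizing a b with
  | zero => exact map_one f
  | succ n ih => rw [altWord, altWord, map_mul, ih]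

lemma altWord_two_mul_add {M : Type*} [Monoid M] (a b : M) (k n : ℕ) :
    altWord a b (2 * k + n) = (a * b) ^ k * altWord a b n := by
  induction k with
  | zero => simp
  | succ k ih =>
    rw [show 2 * (k + 1) + n = 2 * k + n + 1 + 1 by ring, altWord, altWord, ih, pow_succ',
      mul_assoc, mul_assoc]

theorem altWord_eq_altWord_iff {G : Type*} [Group G] (a b : G) (m : ℕ) :
    altWord a b m = altWord b a m ↔ chainSeq a (a * b) m = a := by
  -- `(a b)ᵏ a = a (b a)ᵏ`: for even `m` both sides say that `a` commutes with `(a b)ᵏ`.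
  obtain ⟨k, rfl | rfl⟩ := Nat.even_or_odd' m
  · rw [← add_zero (2 * k), altWord_two_mul_add, altWord_two_mul_add, chainSeq_two_mul_add]
    simp only [altWord, mul_one, chainSeq_zero]
    rw [eq_inv_mul_iff_mul_eq.2 (mul_pow_mul a b k).symm, eq_inv_mul_iff_mul_eq, mul_assoc,
      inv_mul_eq_iff_eq_mul]
  · rw [altWord_two_mul_add, altWord_two_mul_add, chainSeq_two_mul_add, chainSeq_one]
    simp only [altWord, mul_one]
    rw [mul_pow_mul b a, mul_assoc, inv_mul_eq_iff_eq_mul, eq_comm]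

section IPresentation

variable (m : ℕ)

def iX : PresentedGroup (IRels m) := of (Sum.inr ())

variable [NeZero m]

/-- `iGen m n` is the generator `a_{n+1}` of `I_m`, with the index read modulo `m`. -/
def iGen (n : ℕ) : PresentedGroup (IRels m) := of (Sum.inl (Fin.ofNat m n))

lemma iGen_val (i : Fin m) : iGen m i.val = of (Sum.inl i) := by
  rw [iGen, Fin.ofNat_val_eq_self]

lemma iGen_periodic : Periodic (iGen m) m := by
  intro n
  simp only [iGen, Fin.ofNat, Nat.add_mod_right]

lemma finCycSucc_ofNat (n : ℕ) : finCycSucc (Fin.ofNat m n) = Fin.ofNat m (n + 1) :=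
  Fin.ext (Nat.mod_add_mod n m 1)

lemma iGen_mul_iGen_succ (n : ℕ) : iGen m n * iGen m (n + 1) = iX m := by
  rw [iGen, iGen, ← finCycSucc_ofNat, of, of, ← map_mul]
  exact (mk_eq_mk_of_mul_inv_mem (show _ ∈ IRels m from ⟨_, rfl⟩)).symm

lemma iGen_eq_chainSeq (n : ℕ) : iGen m n = chainSeq (iGen m 0) (iX m) n :=
  eq_chainSeq_of_mul_succ _ (iGen_mul_iGen_succ m) n

lemma iGen_artin_relation :
    altWord (iGen m 0) (iGen m 1) m = altWord (iGen m 1) (iGen m 0) m := by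
  rw [altWord_eq_altWord_iff, iGen_mul_iGen_succ, ← iGen_eq_chainSeq, (iGen_periodic m).eq]

end IPresentation

section ArtinGroup

variable (m : ℕ)

abbrev artinRels : Set (FreeGroup (Fin 2)) :=
  {altWord (FreeGroup.of 0) (FreeGroup.of 1) m * (altWord (FreeGroup.of 1) (FreeGroup.of 0) m)⁻¹}

lemma artin_relation :
    altWord (of 0 : PresentedGroup (artinRels m)) (of 1) m = altWord (of 1) (of 0) m := by
  simpa only [of, map_altWord] using
    mk_eq_mk_of_mul_inv_mem (rels := artinRels m) (Set.mem_singleton _)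

lemma chainSeq_artin_periodic :
    Periodic (chainSeq (of 0 : PresentedGroup (artinRels m)) (of 0 * of 1)) m :=
  chainSeq_periodic _ _ ((altWord_eq_altWord_iff _ _ m).1 (artin_relation m))

end ArtinGroup

section Isomorphism

variable (m : ℕ)

def iToArtin : PresentedGroup (IRels m) →* PresentedGroup (artinRels m) :=
  toGroup (rels := IRels m)
      (f := Sum.elim (fun i : Fin m => chainSeq (of 0) (of 0 * of 1) i.val)
        fun _ => of 0 * of 1) <| by
    rintro _ ⟨i, rfl⟩
    rw [map_mul, map_inv, mul_inv_eq_one, map_mul]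
    simp only [FreeGroup.lift_apply_of, Sum.elim_inl, Sum.elim_inr, finCycSucc]
    rw [(chainSeq_artin_periodic m).map_mod_nat, chainSeq_mul_chainSeq_succ]

lemma iToArtin_iX : iToArtin m (iX m) = of 0 * of 1 := by
  rw [iX, iToArtin, toGroup.of, Sum.elim_inr]

variable [NeZero m]

def artinToI : PresentedGroup (artinRels m) →* PresentedGroup (IRels m) :=
  toGroup (f := fun i : Fin 2 => iGen m i) <| by
    rintro _ rfl
    rw [map_mul, map_inv, mul_inv_eq_one, map_altWord, map_altWord]
    exact iGen_artin_relation m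

lemma iToArtin_iGen (n : ℕ) : iToArtin m (iGen m n) = chainSeq (of 0) (of 0 * of 1) n := by
  rw [iGen, iToArtin, toGroup.of, Sum.elim_inl, Fin.val_ofNat,
    (chainSeq_artin_periodic m).map_mod_nat]

lemma artinToI_of (i : Fin 2) : artinToI m (of i) = iGen m i := toGroup.of _

theorem iToArtin_comp_artinToI : (iToArtin m).comp (artinToI m) = MonoidHom.id _ := by
  ext i
  fin_cases i <;> simp [artinToI_of, iToArtin_iGen]

theorem artinToI_comp_iToArtin : (artinToI m).comp (iToArtin m) = MonoidHom.id _ := by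
  have hx : artinToI m (of 0 * of 1) = iX m := by
    rw [map_mul, artinToI_of, artinToI_of]
    exact iGen_mul_iGen_succ m 0
  ext (i | ⟨⟩)
  · rw [MonoidHom.comp_apply, ← iGen_val, iToArtin_iGen, map_chainSeq, hx, artinToI_of,
      Fin.val_zero, ← iGen_eq_chainSeq, MonoidHom.id_apply]
  · exact (congrArg (artinToI m) (iToArtin_iX m)).trans hx

def artinEquivI : PresentedGroup (artinRels m) ≃* PresentedGroup (IRels m) :=
  MonoidHom.toMulEquiv _ _ (iToArtin_comp_artinToI m) (artinToI_comp_iToArtin m)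

end Isomorphism

end ArtinPresentation

/-- For every integer `m ≥ 2`, the two-generator Artin group
`G_m = ⟨a₁, a₂ ∣ (a₁,a₂)_m = (a₂,a₁)_m⟩` is isomorphic to
`I_m = ⟨x, a₁, a₂, …, a_m ∣ x = a₁a₂, x = a₂a₃, …, x = a_m a₁⟩`. -/
theorem artin_Gm_iso_Im (m : ℕ) (hm : 2 ≤ m) :
    Nonempty
      ((PresentedGroup
          ({altWord (FreeGroup.of 0) (FreeGroup.of 1) m *
              (altWord (FreeGroup.of 1) (FreeGroup.of 0) m)⁻¹} : Set (FreeGroup (Fin 2)))) ≃*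
        PresentedGroup (IRels m)) :=
  have : NeZero m := ⟨by omega⟩
  ⟨ArtinPresentation.artinEquivI m⟩
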